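/- Let G = (V, W) be a bipartite graph whose transversal system is a transversal matroid M_T(G), and let m_0 be a matching of a base of M_T(G) onto W. Then M_T(G) = M_{PT}(G, m_0): a set I ⊆ V is matchable if and only if it is m_0-matchable. -/

import Mathlib

open Set

section Bipartite

variable {V W : Type*}

/-- `m` is a matching in the bipartite graph with edge set `E ⊆ V × W`. -/
def IsBipMatching (E m : Set (V × W)) : Prop :=
  m ⊆ E ∧ ∀ p ∈ m, ∀ q ∈ m, (p.1 = q.1 ∨ p.2 = q.2) → p = q

/-- `I ⊆ V` is matchable in the bipartite graph with edge set `E`. -/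
def Matchable (E : Set (V × W)) (I : Set V) : Prop :=
  ∃ m, IsBipMatching E m ∧ Prod.fst '' m = I

/-- One step along an edge of `F` in the bipartite graph, on vertex type `V ⊕ W`. -/
def bipStep (F : Set (V × W)) : (V ⊕ W) → (V ⊕ W) → Prop := fun a b =>
  match a, b with
  | Sum.inl v, Sum.inr w => (v, w) ∈ F
  | Sum.inr w, Sum.inl v => (v, w) ∈ F
  | _, _ => False

/-- Every connected component of the bipartite graph with edge set `F` is finite. -/
def FiniteComponents (F : Set (V × W)) : Prop :=
  ∀ x : V ⊕ W, {y | Relation.ReflTransGen (bipStep F) x y}.Finite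

/-- `m` is an `m0`-matching: a matching such that every component of `m0 ∪ m` is finite. -/
def IsM0Matching (E m0 m : Set (V × W)) : Prop :=
  IsBipMatching E m ∧ FiniteComponents (m0 ∪ m)

/-- `I` is `m0`-matchable. -/
def M0Matchable (E m0 : Set (V × W)) (I : Set V) : Prop :=
  ∃ m, IsM0Matching E m0 m ∧ Prod.fst '' m = I

/-- `I` is `m0`-matchable onto `W'`. -/
def M0MatchableOnto (E m0 : Set (V × W)) (I : Set V) (W' : Set W) : Prop :=
  ∃ m, IsM0Matching E m0 m ∧ Prod.fst '' m = I ∧ Prod.snd '' m = W'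

end Bipartite

section Star

variable {V : Type*}

/-- The edge set of the converted bimaze of the dimaze `(D, B0)`: the right class is
`{v ∣ v ∉ B0}` (representing `(V \ B0)⋆`) and the edges are the identity matching
together with `v u⋆` for every edge `(u, v)` of `D`. -/
def starEdges (D : V → V → Prop) (B0 : Set V) : Set (V × V) :=
  {p | (p.1 = p.2 ∧ p.2 ∉ B0) ∨ (D p.2 p.1 ∧ p.2 ∉ B0)}

/-- The identity matching of the converted bimaze. -/
def starM0 (B0 : Set V) : Set (V × V) := {p | p.1 = p.2 ∧ p.1 ∉ B0}

end Star

/-! If `m` matches `I`, keep `m` on the finite components of `m0 ∪ m` and use `m0` on the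
infinite ones; this matches `I` with finite components as soon as every `m`-covered vertex of an
infinite component is covered by `m0`. Since `m0` covers `W`, the component of an `m`-covered vertex
`v ∉ B` is the walk from `v` alternating between `m` and `m0`. If it were infinite, switching `m0`
along this ray would match `insert v B`, which is impossible for a base `B`. -/

open Relation Sum

section Graph

variable {V W : Type*} {F F' : Set (V × W)}

def bipComponent (F : Set (V × W)) (x : V ⊕ W) : Set (V ⊕ W) :=
  {y | ReflTransGen (bipStep F) x y}

@[simp] lemma bipStep_inl_inr {v : V} {w : W} : bipStep F (inl v) (inr w) ↔ (v, w) ∈ F :=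
  Iff.rfl

@[simp] lemma bipStep_inr_inl {v : V} {w : W} : bipStep F (inr w) (inl v) ↔ (v, w) ∈ F :=
  Iff.rfl

@[simp] lemma not_bipStep_inl_inl {v v' : V} : ¬ bipStep F (inl v) (inl v') := id

@[simp] lemma not_bipStep_inr_inr {w w' : W} : ¬ bipStep F (inr w) (inr w') := id

lemma bipStep_symm {x y : V ⊕ W} (h : bipStep F x y) : bipStep F y x := by
  cases x <;> cases y <;> simp_all

lemma bipStep_mono (hF : F ⊆ F') {x y : V ⊕ W} (h : bipStep F x y) : bipStep F' x y := by
  cases x <;> cases y <;> simp_all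
  all_goals exact hF h

lemma bipStep_union_iff {x y : V ⊕ W} :
    bipStep (F ∪ F') x y ↔ bipStep F x y ∨ bipStep F' x y := by
  cases x <;> cases y <;> simp

lemma bipComponent_mono (hF : F ⊆ F') (x : V ⊕ W) : bipComponent F x ⊆ bipComponent F' x :=
  fun _ hy => ReflTransGen.mono (fun _ _ => bipStep_mono hF) x _ hy

instance : Std.Symm (bipStep F) := ⟨fun _ _ => bipStep_symm⟩

lemma bipComponent_eq_of_reflTransGen {x y : V ⊕ W} (h : ReflTransGen (bipStep F) x y) :
    bipComponent F x = bipComponent F y := by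
  ext z
  exact ⟨(symm_of (ReflTransGen (bipStep F)) h).trans, h.trans⟩

lemma reflTransGen_inl_inl_of_adj {p q : V × W} (hp : p ∈ F) (hq : q ∈ F)
    (h : p.1 = q.1 ∨ p.2 = q.2) : ReflTransGen (bipStep F) (inl p.1) (inl q.1) := by
  rcases h with h | h
  · rw [h]
  · exact .tail (.single (b := inr p.2) hp) (show (q.1, p.2) ∈ F from h ▸ hq)

lemma FiniteComponents.anti (h : FiniteComponents F') (hF : F ⊆ F') : FiniteComponents F :=
  fun x => (h x).subset (bipComponent_mono hF x)

end Graph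

namespace IsBipMatching

variable {V W : Type*} {E m m' : Set (V × W)}

lemma right_unique (hm : IsBipMatching E m) {v : V} {w w' : W} (h : (v, w) ∈ m)
    (h' : (v, w') ∈ m) : w = w' :=
  congrArg Prod.snd (hm.2 _ h _ h' (Or.inl rfl))

lemma left_unique (hm : IsBipMatching E m) {v v' : V} {w : W} (h : (v, w) ∈ m)
    (h' : (v', w) ∈ m) : v = v' :=
  congrArg Prod.fst (hm.2 _ h _ h' (Or.inr rfl))

lemma subset (hm : IsBipMatching E m) (h : m' ⊆ m) : IsBipMatching E m' :=
  ⟨h.trans hm.1, fun p hp q hq => hm.2 p (h hp) q (h hq)⟩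

lemma union (hm : IsBipMatching E m) (hm' : IsBipMatching E m')
    (hdisj : ∀ p ∈ m, ∀ q ∈ m', ¬(p.1 = q.1 ∨ p.2 = q.2)) :
    IsBipMatching E (m ∪ m') := by
  refine ⟨union_subset hm.1 hm'.1, ?_⟩
  rintro p (hp | hp) q (hq | hq) hpq
  · exact hm.2 p hp q hq hpq
  · exact (hdisj p hp q hq hpq).elim
  · exact (hdisj q hq p hp (hpq.imp Eq.symm Eq.symm)).elim
  · exact hm'.2 p hp q hq hpq

lemma bipStep_unique (hm : IsBipMatching E m) {x y z : V ⊕ W} (hy : bipStep m x y)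
    (hz : bipStep m x z) : y = z := by
  rcases x with v | w <;> rcases y with v' | w' <;> rcases z with v'' | w'' <;> simp at hy hz
  · rw [hm.right_unique hy hz]
  · rw [hm.left_unique hy hz]

lemma finiteComponents (hm : IsBipMatching E m) : FiniteComponents m := by
  intro x
  have hsub : bipComponent m x ⊆ insert x {y | bipStep m x y} := by
    intro y hy
    induction hy with
    | refl => exact mem_insert x _
    | tail _ hbc ih =>
      rcases ih with rfl | hxb
      · exact Or.inr hbc
      · exact Or.inl (hm.bipStep_unique (bipStep_symm hxb) hbc).symm
  refine ((Set.Subsingleton.finite ?_).insert x).subset hsub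
  exact fun _ hy _ hz => hm.bipStep_unique hy hz

end IsBipMatching

section FiniteComponentEdges

variable {V W : Type*} {E m0 m : Set (V × W)}

def finiteComponentEdges (m0 m : Set (V × W)) : Set (V × W) :=
  {p ∈ m | (bipComponent (m0 ∪ m) (inl p.1)).Finite}

lemma finite_bipComponent_of_bipStep_finiteComponentEdges {x y : V ⊕ W}
    (h : bipStep (finiteComponentEdges m0 m) x y) : (bipComponent (m0 ∪ m) x).Finite := by
  rcases x with v | w <;> rcases y with v' | w' <;> simp at h
  · exact h.2
  · have hstep : bipStep (m0 ∪ m) (inr w) (inl v') := Or.inr h.1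
    rw [bipComponent_eq_of_reflTransGen (.single hstep)]
    exact h.2

lemma finiteComponents_union_finiteComponentEdges (hm0 : IsBipMatching E m0) :
    FiniteComponents (m0 ∪ finiteComponentEdges m0 m) := by
  intro x
  by_cases hx : (bipComponent (m0 ∪ m) x).Finite
  · exact hx.subset (bipComponent_mono (union_subset_union_right _ (sep_subset _ _)) x)
  -- a walk from `x` stays in its infinite component, so it uses no `finiteComponentEdges` edge
  refine (hm0.finiteComponents x).subset fun y hy => ?_
  induction hy with
  | refl => exact .refl
  | tail _ hbc ih =>
    rcases bipStep_union_iff.1 hbc with h | h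
    · exact ih.tail h
    · refine (hx ?_).elim
      rw [bipComponent_eq_of_reflTransGen
        (ReflTransGen.mono (fun _ _ => bipStep_mono subset_union_left) _ _ ih)]
      exact finite_bipComponent_of_bipStep_finiteComponentEdges h

lemma m0Matchable_image_fst (hm0 : IsBipMatching E m0) (hm : IsBipMatching E m)
    (hcov : ∀ p ∈ m, ¬(bipComponent (m0 ∪ m) (inl p.1)).Finite → p.1 ∈ Prod.fst '' m0) :
    M0Matchable E m0 (Prod.fst '' m) := by
  set m' := finiteComponentEdges m0 m ∪
    {p ∈ m0 | p.1 ∈ Prod.fst '' m ∧ ¬(bipComponent (m0 ∪ m) (inl p.1)).Finite}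
  have hmatch : IsBipMatching E m' := by
    refine (hm.subset (sep_subset _ _)).union (hm0.subset (sep_subset _ _)) ?_
    rintro p ⟨hp, hpfin⟩ q ⟨hq, -, hqinf⟩ hpq
    refine hqinf ?_
    rwa [← bipComponent_eq_of_reflTransGen
      (reflTransGen_inl_inl_of_adj (Or.inr hp) (Or.inl hq) hpq)]
  have hcomp : FiniteComponents (m0 ∪ m') := by
    refine (finiteComponents_union_finiteComponentEdges (m := m) hm0).anti ?_
    rintro p (hp | hp | ⟨hp, -⟩)
    exacts [Or.inl hp, Or.inr hp, Or.inl hp]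
  have himage : Prod.fst '' m' = Prod.fst '' m := by
    refine Subset.antisymm ?_ ?_
    · rintro _ ⟨p, ⟨hp, -⟩ | ⟨-, hp, -⟩, rfl⟩
      exacts [mem_image_of_mem _ hp, hp]
    · rintro _ ⟨p, hp, rfl⟩
      by_cases hfin : (bipComponent (m0 ∪ m) (inl p.1)).Finite
      · exact ⟨p, Or.inl ⟨hp, hfin⟩, rfl⟩
      · obtain ⟨q, hq, hqp⟩ := hcov p hp hfin
        exact ⟨q, Or.inr ⟨hq, hqp ▸ mem_image_of_mem _ hp, hqp ▸ hfin⟩, hqp⟩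
  exact ⟨m', ⟨hmatch, hcomp⟩, himage⟩

end FiniteComponentEdges

section AugmentingRay

variable {V W : Type*} {E m0 m : Set (V × W)}

lemma matchable_insert_of_augmentingRay (hm0 : IsBipMatching E m0) (hm : IsBipMatching E m)
    {es : ℕ → V × W} (hes : ∀ n, es n ∈ m)
    (hes0 : ∀ n, ((es (n + 1)).1, (es n).2) ∈ m0)
    (hv : (es 0).1 ∉ Prod.fst '' m0) :
    Matchable E (insert (es 0).1 (Prod.fst '' m0)) := by
  set R := range fun n => ((es (n + 1)).1, (es n).2)
  have hdisj : ∀ p ∈ m0 \ R, ∀ q ∈ range es, ¬(p.1 = q.1 ∨ p.2 = q.2) := by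
    rintro p ⟨hp, hpR⟩ _ ⟨n, rfl⟩ (h | h)
    · cases n with
      | zero => exact hv ⟨p, hp, h⟩
      | succ j => exact hpR ⟨j, hm0.2 _ (hes0 j) _ hp (Or.inl h.symm)⟩
    · exact hpR ⟨n, hm0.2 _ (hes0 n) _ hp (Or.inr h.symm)⟩
  refine ⟨(m0 \ R) ∪ range es,
    (hm0.subset sdiff_subset).union (hm.subset (range_subset_iff.2 hes)) hdisj, ?_⟩
  refine Subset.antisymm ?_ ?_
  · rintro _ ⟨p, ⟨hp, -⟩ | ⟨n, rfl⟩, rfl⟩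
    · exact Or.inr (mem_image_of_mem _ hp)
    · cases n with
      | zero => exact mem_insert _ _
      | succ j => exact Or.inr ⟨_, hes0 j, rfl⟩
  · rintro v (rfl | ⟨p, hp, rfl⟩)
    · exact ⟨es 0, Or.inr ⟨0, rfl⟩, rfl⟩
    · by_cases hpR : p ∈ R
      · obtain ⟨n, rfl⟩ := hpR
        exact ⟨es (n + 1), Or.inr ⟨n + 1, rfl⟩, rfl⟩
      · exact ⟨p, Or.inl ⟨hp, hpR⟩, rfl⟩

end AugmentingRay

section AlternatingWalk

variable {V W : Type*} {E m0 m : Set (V × W)} {g : W → V} {e e0 : V × W}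

open Classical in
/-- One step of the alternating walk, `g w` being the `m0`-partner of `w`; the walk stays put
once it cannot continue. -/
noncomputable def altNext (m : Set (V × W)) (g : W → V) (e : V × W) : V × W :=
  if h : ∃ w, (g e.2, w) ∈ m then (g e.2, h.choose) else e

noncomputable def altSeq (m : Set (V × W)) (g : W → V) (e0 : V × W) (n : ℕ) : V × W :=
  (altNext m g)^[n] e0

def altTriple (g : W → V) (e : V × W) : Set (V ⊕ W) :=
  {inl e.1, inr e.2, inl (g e.2)}

def altWalk (m : Set (V × W)) (g : W → V) (e0 : V × W) : Set (V ⊕ W) :=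
  ⋃ n, altTriple g (altSeq m g e0 n)

lemma altNext_mem (he : e ∈ m) : altNext m g e ∈ m := by
  unfold altNext
  split_ifs with h
  exacts [h.choose_spec, he]

lemma altNext_eq_of_mem (hm : IsBipMatching E m) {w : W} (h : (g e.2, w) ∈ m) :
    altNext m g e = (g e.2, w) := by
  have hex : ∃ w, (g e.2, w) ∈ m := ⟨w, h⟩
  rw [altNext, dif_pos hex, hm.right_unique hex.choose_spec h]

lemma altNext_eq_self (h : ¬∃ w, (g e.2, w) ∈ m) : altNext m g e = e :=
  dif_neg h

lemma altSeq_succ (n : ℕ) : altSeq m g e0 (n + 1) = altNext m g (altSeq m g e0 n) :=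
  Function.iterate_succ_apply' _ _ _

lemma altSeq_mem (he0 : e0 ∈ m) (n : ℕ) : altSeq m g e0 n ∈ m := by
  induction n with
  | zero => exact he0
  | succ n ih => exact altSeq_succ n ▸ altNext_mem ih

lemma altSeq_succ_fst {n : ℕ} (h : ∃ w, (g (altSeq m g e0 n).2, w) ∈ m) :
    (altSeq m g e0 (n + 1)).1 = g (altSeq m g e0 n).2 := by
  rw [altSeq_succ, altNext, dif_pos h]

lemma altSeq_fst (n : ℕ) :
    (altSeq m g e0 n).1 = e0.1 ∨ ∃ k, (altSeq m g e0 n).1 = g (altSeq m g e0 k).2 := by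
  induction n with
  | zero => exact Or.inl rfl
  | succ n ih =>
    by_cases h : ∃ w, (g (altSeq m g e0 n).2, w) ∈ m
    · exact Or.inr ⟨n, altSeq_succ_fst h⟩
    · rwa [altSeq_succ, altNext_eq_self h]

lemma finite_altWalk_of_stuck {N : ℕ} (h : ¬∃ w, (g (altSeq m g e0 N).2, w) ∈ m) :
    (altWalk m g e0).Finite := by
  have hrange : range (altSeq m g e0) ⊆ altSeq m g e0 '' Iic N := by
    rintro _ ⟨n, rfl⟩
    rcases le_total n N with hn | hn
    · exact mem_image_of_mem _ hn
    · refine ⟨N, mem_Iic.2 le_rfl, ?_⟩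
      change altSeq m g e0 N = (altNext m g)^[n] e0
      rw [← Nat.sub_add_cancel hn, Function.iterate_add_apply]
      exact (Function.iterate_fixed (altNext_eq_self h) _).symm
  have hfin : (⋃ e ∈ altSeq m g e0 '' Iic N, altTriple g e).Finite :=
    ((finite_Iic N).image _).biUnion fun e _ => ((finite_singleton _).insert _).insert _
  refine hfin.subset ?_
  rintro z ⟨_, ⟨n, rfl⟩, hz⟩
  exact mem_biUnion (hrange (mem_range_self n)) hz

lemma altWalk_bipStep_closed (hm0 : IsBipMatching E m0) (hg : ∀ w, (g w, w) ∈ m0)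
    (hm : IsBipMatching E m) (he0 : e0 ∈ m) (hv : e0.1 ∉ Prod.fst '' m0) {z z' : V ⊕ W}
    (hz : z ∈ altWalk m g e0) (h : bipStep (m0 ∪ m) z z') : z' ∈ altWalk m g e0 := by
  simp only [altWalk, altTriple, mem_iUnion] at hz ⊢
  obtain ⟨k, hz⟩ := hz
  have hem : ((altSeq m g e0 k).1, (altSeq m g e0 k).2) ∈ m := altSeq_mem he0 k
  rcases hz with rfl | rfl | rfl <;> rcases z' with v | w <;> simp at h <;> rcases h with h | h
  · obtain ⟨j, hj⟩ := (altSeq_fst k).resolve_left fun h' => hv ⟨_, h, h'⟩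
    have hw : w = (altSeq m g e0 j).2 := hm0.right_unique h (by rw [hj]; exact hg _)
    exact ⟨j, by simp [hw]⟩
  · exact ⟨k, by simp [hm.right_unique h hem]⟩
  · exact ⟨k, by simp [hm0.left_unique h (hg _)]⟩
  · exact ⟨k, by simp [hm.left_unique h hem]⟩
  · exact ⟨k, by simp [hm0.right_unique h (hg _)]⟩
  · exact ⟨k + 1, by simp [altSeq_succ, altNext_eq_of_mem hm h]⟩

lemma bipComponent_subset_altWalk (hm0 : IsBipMatching E m0) (hg : ∀ w, (g w, w) ∈ m0)
    (hm : IsBipMatching E m) (he0 : e0 ∈ m) (hv : e0.1 ∉ Prod.fst '' m0) :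
    bipComponent (m0 ∪ m) (inl e0.1) ⊆ altWalk m g e0 := by
  intro y hy
  induction hy with
  | refl => exact mem_iUnion.2 ⟨0, mem_insert _ _⟩
  | tail _ h ih => exact altWalk_bipStep_closed hm0 hg hm he0 hv ih h

end AlternatingWalk

lemma finite_bipComponent_of_not_matchable_insert {V W : Type*} {E m0 m : Set (V × W)}
    {e0 : V × W} (hm0 : IsBipMatching E m0) (hsnd : Prod.snd '' m0 = univ)
    (hm : IsBipMatching E m) (he0 : e0 ∈ m) (hv : e0.1 ∉ Prod.fst '' m0)
    (hmax : ¬ Matchable E (insert e0.1 (Prod.fst '' m0))) :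
    (bipComponent (m0 ∪ m) (inl e0.1)).Finite := by
  have hpartner : ∀ w, ∃ v, (v, w) ∈ m0 := fun w => by
    obtain ⟨p, hp, rfl⟩ : w ∈ Prod.snd '' m0 := hsnd ▸ mem_univ w
    exact ⟨p.1, hp⟩
  choose g hg using hpartner
  refine Finite.subset ?_ (bipComponent_subset_altWalk hm0 hg hm he0 hv)
  by_cases hray : ∀ n, ∃ w, (g (altSeq m g e0 n).2, w) ∈ m
  · exact (hmax (matchable_insert_of_augmentingRay hm0 hm (altSeq_mem he0)
      (fun n => altSeq_succ_fst (hray n) ▸ hg _) hv)).elim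
  · obtain ⟨N, hN⟩ := not_forall.1 hray
    exact finite_altWalk_of_stuck hN

theorem transversal_eq_pathTransversal {V W : Type*} (E : Set (V × W)) (M : Matroid V)
    (hInd : ∀ I, M.Indep I ↔ Matchable E I)
    (m0 : Set (V × W)) (B : Set V) (hm0 : IsBipMatching E m0) (hB : M.IsBase B)
    (hfst : Prod.fst '' m0 = B) (hsnd : Prod.snd '' m0 = Set.univ) :
    ∀ I, Matchable E I ↔ M0Matchable E m0 I := by
  subst hfst
  intro I
  refine ⟨?_, fun ⟨m, hm, hI⟩ => ⟨m, hm.1, hI⟩⟩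
  rintro ⟨m, hm, rfl⟩
  refine m0Matchable_image_fst hm0 hm fun p hp hinf => ?_
  by_contra hpB
  exact hinf (finite_bipComponent_of_not_matchable_insert hm0 hsnd hm hp hpB
    fun hins => hpB (hB.mem_of_insert_indep ((hInd _).2 hins)))
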